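/- Let g, h : R^n → R ∪ {+∞} with g proper lower semicontinuous and h convex, and suppose h is c-strongly convex (equivalently h - c||·||² is convex) and g is c-strongly convex. If uᵗ⁺¹ minimizes u ↦ g(u) - ⟨v, u⟩ for v ∈ ∂h(uᵗ), then (g - h)(uᵗ) - (g - h)(uᵗ⁺¹) ≥ 2c ||uᵗ⁺¹ - uᵗ||². -/
import Mathlib


open RealInnerProductSpace in
/-- Sufficient decrease of one DCA step under strong convexity of g and h. -/
theorem stmt6 (n : ℕ) (c : ℝ) (hc : 0 < c)
    (g h : EuclideanSpace ℝ (Fin n) → ℝ)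
    (hg : StrongConvexOn Set.univ (2 * c) g)
    (hh : ConvexOn ℝ Set.univ h)
    (ut unext v : EuclideanSpace ℝ (Fin n))
    (hv : ∀ y, h y ≥ h ut + ⟪v, y - ut⟫ + c * ‖y - ut‖ ^ 2)
    (hmin : ∀ w, g unext - ⟪v, unext⟫ ≤ g w - ⟪v, w⟫) :
    (g ut - h ut) - (g unext - h unext) ≥ 2 * c * ‖unext - ut‖ ^ 2 := by
  set d : ℝ := ‖unext - ut‖ ^ 2 with hd
  have hd' : ‖ut - unext‖ ^ 2 = d := by rw [norm_sub_rev]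
  -- key inequality from strong convexity of g and minimality of unext
  have key : ∀ t : ℝ, 0 < t → t < 1 →
      (g unext - ⟪v, unext⟫) + (1 - t) * c * d ≤ g ut - ⟪v, ut⟫ := by
    intro t ht ht1
    have htb : (0:ℝ) ≤ 1 - t := by linarith
    have hconv := hg.2 (Set.mem_univ ut) (Set.mem_univ unext) ht.le htb (by ring)
    have hlin : ⟪v, t • ut + (1 - t) • unext⟫ = t * ⟪v, ut⟫ + (1 - t) * ⟪v, unext⟫ := by
      rw [inner_add_right, inner_smul_right, inner_smul_right]
    have hm := hmin (t • ut + (1 - t) • unext)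
    rw [hlin] at hm
    simp only [smul_eq_mul] at hconv
    -- hconv : g (t•ut+(1-t)•unext) ≤ t * g ut + (1-t) * g unext - t*(1-t)*((2*c)/2*‖ut-unext‖^2)
    rw [hd'] at hconv
    nlinarith [hm, hconv]
  have hK : c * d ≤ (g ut - ⟪v, ut⟫) - (g unext - ⟪v, unext⟫) := by
    have hlim : Filter.Tendsto (fun t : ℝ => (1 - t) * c * d) (nhdsWithin 0 (Set.Ioi 0))
        (nhds (c * d)) := by
      have : Filter.Tendsto (fun t : ℝ => (1 - t) * c * d) (nhds 0) (nhds ((1 - 0) * c * d)) := by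
        apply Filter.Tendsto.mul_const
        apply Filter.Tendsto.mul_const
        exact (continuous_const.sub continuous_id).tendsto 0
      simpa using this.mono_left nhdsWithin_le_nhds
    have hev : ∀ᶠ t in nhdsWithin (0:ℝ) (Set.Ioi 0),
        (1 - t) * c * d ≤ (g ut - ⟪v, ut⟫) - (g unext - ⟪v, unext⟫) := by
      filter_upwards [Ioo_mem_nhdsGT_of_mem (by norm_num : (0:ℝ) ∈ Set.Ico 0 1)] with t ht
      have := key t ht.1 ht.2
      linarith
    exact le_of_tendsto hlim hev
  have hhv := hv unext
  have hiut : ⟪v, unext⟫ - ⟪v, ut⟫ = ⟪v, unext - ut⟫ := (inner_sub_right v unext ut).symm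
  have hcd : 0 ≤ d := sq_nonneg _
  nlinarith [hhv, hK]
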